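/- arXiv:1709.05318 — 2 statements merged into one kernel-verified Lean document; each statement's English description precedes it below -/
import Mathlib

section
/- Assume conditions (C1), (C2) and (C3) hold for Γ and h, let ρ_k > 0 and p_k > 0 with h(ρ_k) ≤ p_k, and let ρ_max > ρ_k be the unique density with (ρ_max − ρ_k)Γ(ρ_max) = 2ρ_k. Then for every p > p_k there exists exactly one ρ ∈ (ρ_k, ρ_max) such that Φ(p, ρ) = 0. -/
open Set Filter

/-- The Hugoniot function `Φ(p,ρ)` associated with the Mie-Grüneisen EOS
`p(ρ,e) = Γ(ρ)ρe + h(ρ)` and the fixed state `(ρ_k, p_k)`. -/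
noncomputable def hugoniot (Γ h : ℝ → ℝ) (ρk pk p ρ : ℝ) : ℝ :=
  Γ ρk * ρk * (p - h ρ) - Γ ρ * ρ * (pk - h ρk)
    - 1 / 2 * Γ ρk * Γ ρ * (p + pk) * (ρ - ρk)

/-!
`Φ(p, ·)` equals `Γ(ρ_k)ρ_k(p - p_k) > 0` at `ρ_k`, and it is strictly decreasing for `ρ > ρ_k`:
its derivative is `-Γ(ρ_k)ρ_k h' - (ρΓ)'(p_k - h(ρ_k)) - ½Γ(ρ_k)(p + p_k)(Γ'(ρ - ρ_k) + Γ)`,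
and the last bracket is positive whatever the sign of `Γ'`, because `(ρΓ)' ≥ 0`. At `ρ_max` the
defining relation turns the last term of `Φ` into `Γ(ρ_k)ρ_k(p + p_k)`, and the monotonicity of
`ρΓ` and `h` gives `Φ(p, ρ_max) ≤ -2Γ(ρ_k)ρ_k p_k < 0`. The intermediate value theorem and strict
monotonicity give the unique root.
-/

theorem existsUnique_mem_Ioo_eq_zero_of_strictAntiOn {f : ℝ → ℝ} {a b : ℝ} (hab : a ≤ b)
    (hf : ContinuousOn f (Icc a b)) (hanti : StrictAntiOn f (Icc a b)) (ha : 0 < f a)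
    (hb : f b < 0) : ∃! x, x ∈ Ioo a b ∧ f x = 0 := by
  obtain ⟨x, hx, hfx⟩ := intermediate_value_Ioo' hab hf ⟨hb, ha⟩
  refine ⟨x, ⟨hx, hfx⟩, fun y ⟨hy, hfy⟩ => ?_⟩
  exact hanti.injOn (Ioo_subset_Icc_self hy) (Ioo_subset_Icc_self hx) (hfy.trans hfx.symm)

theorem monotoneOn_Ioi_of_deriv_nonneg {f : ℝ → ℝ} {a : ℝ}
    (hf : ∀ x > a, DifferentiableAt ℝ f x) (hf' : ∀ x > a, 0 ≤ deriv f x) :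
    MonotoneOn f (Ioi a) := by
  refine monotoneOn_of_deriv_nonneg (convex_Ioi a)
    (fun x hx => (hf x hx).continuousAt.continuousWithinAt) ?_ ?_
  · rw [interior_Ioi]
    exact fun x hx => (hf x hx).differentiableWithinAt
  · rw [interior_Ioi]
    exact hf'

section

variable {Γ h : ℝ → ℝ} {ρk pk p : ℝ}

theorem hugoniot_self : hugoniot Γ h ρk pk p ρk = Γ ρk * ρk * (p - pk) := by
  unfold hugoniot
  ring

theorem hugoniot_of_mul_eq {ρ : ℝ} (hρ : (ρ - ρk) * Γ ρ = 2 * ρk) :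
    hugoniot Γ h ρk pk p ρ = -(Γ ρk * ρk * (h ρ + pk)) - Γ ρ * ρ * (pk - h ρk) := by
  unfold hugoniot
  linear_combination (-(1 / 2) * Γ ρk * (p + pk)) * hρ

theorem hasDerivAt_hugoniot {ρ Γ' h' : ℝ} (hΓ : HasDerivAt Γ Γ' ρ) (hh : HasDerivAt h h' ρ) :
    HasDerivAt (hugoniot Γ h ρk pk p)
      (-(Γ ρk * ρk * h') - (Γ ρ + ρ * Γ') * (pk - h ρk)
        - Γ ρk * (p + pk) / 2 * (Γ' * (ρ - ρk) + Γ ρ)) ρ := by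
  have := ((((hasDerivAt_const ρ p).sub hh).const_mul (Γ ρk * ρk)).sub
    ((hΓ.mul (hasDerivAt_id' ρ)).mul_const (pk - h ρk))).sub
    (((hΓ.const_mul (1 / 2 * Γ ρk)).mul_const (p + pk)).mul ((hasDerivAt_id' ρ).sub_const ρk))
  exact this.congr_deriv (by ring)

theorem hugoniot_deriv_neg {ρ Γ' h' : ℝ} (hρk : 0 < ρk) (hρ : ρk < ρ) (hΓk : 0 < Γ ρk)
    (hΓρ : 0 < Γ ρ) (hρΓ : 0 ≤ Γ ρ + ρ * Γ') (hh' : 0 ≤ h') (hhk : h ρk ≤ pk)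
    (hp : 0 < p + pk) :
    -(Γ ρk * ρk * h') - (Γ ρ + ρ * Γ') * (pk - h ρk)
      - Γ ρk * (p + pk) / 2 * (Γ' * (ρ - ρk) + Γ ρ) < 0 := by
  have hslope : 0 < Γ' * (ρ - ρk) + Γ ρ := by
    rcases le_or_gt 0 Γ' with hΓ'0 | hΓ'0 <;> nlinarith
  nlinarith [mul_pos (mul_pos hΓk hp) hslope, mul_nonneg (mul_nonneg hΓk.le hρk.le) hh',
    mul_nonneg hρΓ (sub_nonneg.2 hhk)]

theorem hugoniot_strictAntiOn (hΓd : ∀ ρ > 0, DifferentiableAt ℝ Γ ρ)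
    (hhd : ∀ ρ > 0, DifferentiableAt ℝ h ρ) (hΓpos : ∀ ρ > 0, 0 < Γ ρ)
    (hρΓ : ∀ ρ > 0, 0 ≤ deriv (fun x => x * Γ x) ρ) (hh' : ∀ ρ > 0, 0 ≤ deriv h ρ)
    (hρk : 0 < ρk) (hhk : h ρk ≤ pk) (hp : 0 < p + pk) :
    StrictAntiOn (hugoniot Γ h ρk pk p) (Ici ρk) := by
  have hderiv (ρ : ℝ) (hρ : 0 < ρ) := hasDerivAt_hugoniot (ρk := ρk) (pk := pk) (p := p)
    (hΓd ρ hρ).hasDerivAt (hhd ρ hρ).hasDerivAt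
  refine strictAntiOn_of_deriv_neg (convex_Ici ρk)
    (fun ρ hρ => (hderiv ρ (hρk.trans_le hρ)).continuousAt.continuousWithinAt) ?_
  rw [interior_Ici]
  intro ρ (hρ : ρk < ρ)
  have hρ0 : 0 < ρ := hρk.trans hρ
  have hρΓ' : 0 ≤ Γ ρ + ρ * deriv Γ ρ := by
    have hmul : deriv (fun x => x * Γ x) ρ = 1 * Γ ρ + ρ * deriv Γ ρ :=
      ((hasDerivAt_id' ρ).mul (hΓd ρ hρ0).hasDerivAt).deriv
    simpa only [hmul, one_mul] using hρΓ ρ hρ0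
  rw [(hderiv ρ hρ0).deriv]
  exact hugoniot_deriv_neg hρk hρ (hΓpos ρk hρk) (hΓpos ρ hρ0) hρΓ' (hh' ρ hρ0) hhk hp

end

theorem hugoniot_unique_root_general
    (Γ h : ℝ → ℝ) (Γinf ρk pk ρmax : ℝ)
    (hΓd : ∀ ρ > (0 : ℝ), DifferentiableAt ℝ Γ ρ)
    (hhd : ∀ ρ > (0 : ℝ), DifferentiableAt ℝ h ρ)
    -- condition (C1)
    (hC1b : ∀ ρ > (0 : ℝ), 0 ≤ deriv (fun x => x * Γ x) ρ)
    -- condition (C2)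
    (hΓinf : 0 < Γinf)
    (hC2a : ∀ ρ > (0 : ℝ), Γinf ≤ Γ ρ)
    -- condition (C3)
    (hC3a : ∀ ρ > (0 : ℝ), 0 ≤ deriv h ρ)
    (hρk : 0 < ρk) (hpk : 0 < pk) (hhk : h ρk ≤ pk)
    (hρmax : ρk < ρmax) (hmax : (ρmax - ρk) * Γ ρmax = 2 * ρk) :
    ∀ p > pk, ∃! ρ : ℝ, ρ ∈ Ioo ρk ρmax ∧ hugoniot Γ h ρk pk p ρ = 0 := by
  intro p hp
  have hΓpos : ∀ ρ > 0, 0 < Γ ρ := fun ρ hρ => hΓinf.trans_le (hC2a ρ hρ)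
  have hanti : StrictAntiOn (hugoniot Γ h ρk pk p) (Icc ρk ρmax) :=
    (hugoniot_strictAntiOn hΓd hhd hΓpos hC1b hC3a hρk hhk (by linarith)).mono Icc_subset_Ici_self
  have hcont : ContinuousOn (hugoniot Γ h ρk pk p) (Icc ρk ρmax) := fun ρ hρ =>
    have hρ0 : 0 < ρ := hρk.trans_le hρ.1
    (hasDerivAt_hugoniot (hΓd ρ hρ0).hasDerivAt (hhd ρ hρ0).hasDerivAt).continuousAt
      |>.continuousWithinAt
  have hρΓ_le : ρk * Γ ρk ≤ ρmax * Γ ρmax :=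
    monotoneOn_Ioi_of_deriv_nonneg (fun ρ hρ => differentiableAt_id.mul (hΓd ρ hρ)) hC1b
      hρk (hρk.trans hρmax) hρmax.le
  have hh_le : h ρk ≤ h ρmax :=
    monotoneOn_Ioi_of_deriv_nonneg hhd hC3a hρk (hρk.trans hρmax) hρmax.le
  have hΓk := hΓpos ρk hρk
  refine existsUnique_mem_Ioo_eq_zero_of_strictAntiOn hρmax.le hcont hanti ?_ ?_
  · rw [hugoniot_self]
    exact mul_pos (mul_pos hΓk hρk) (sub_pos.2 hp)
  · rw [hugoniot_of_mul_eq hmax]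
    nlinarith [mul_le_mul_of_nonneg_right hρΓ_le (sub_nonneg.2 hhk),
      mul_le_mul_of_nonneg_left hh_le (mul_pos hΓk hρk).le, mul_pos (mul_pos hΓk hρk) hpk]

/-- Under conditions (C1), (C2) and (C3), for every pressure `p > p_k`
the Hugoniot relation `Φ(p,ρ) = 0` determines a unique post-shock density
`ρ ∈ (ρ_k, ρ_max)`. -/
theorem hugoniot_unique_root
    (Γ h : ℝ → ℝ) (Γinf ρk pk ρmax : ℝ)
    (hΓd : ∀ ρ > (0 : ℝ), DifferentiableAt ℝ Γ ρ)
    (hΓd2 : ∀ ρ > (0 : ℝ), DifferentiableAt ℝ (deriv Γ) ρ)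
    (hhd : ∀ ρ > (0 : ℝ), DifferentiableAt ℝ h ρ)
    (hhd2 : ∀ ρ > (0 : ℝ), DifferentiableAt ℝ (deriv h) ρ)
    -- condition (C1)
    (hC1a : ∀ ρ > (0 : ℝ), deriv Γ ρ ≤ 0)
    (hC1b : ∀ ρ > (0 : ℝ), 0 ≤ deriv (fun x => x * Γ x) ρ)
    (hC1c : ∀ ρ > (0 : ℝ), 0 ≤ deriv (deriv (fun x => x * Γ x)) ρ)
    -- condition (C2)
    (hΓinf : 0 < Γinf)
    (hC2a : ∀ ρ > (0 : ℝ), Γinf ≤ Γ ρ)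
    (hC2b : ∀ ρ > (0 : ℝ), Γ ρ ≤ Γinf + 2)
    -- condition (C3)
    (hC3a : ∀ ρ > (0 : ℝ), 0 ≤ deriv h ρ)
    (hC3b : ∀ ρ > (0 : ℝ), 0 ≤ deriv (deriv h) ρ)
    (hρk : 0 < ρk) (hpk : 0 < pk) (hhk : h ρk ≤ pk)
    (hρmax : ρk < ρmax) (hmax : (ρmax - ρk) * Γ ρmax = 2 * ρk) :
    ∀ p > pk, ∃! ρ : ℝ, ρ ∈ Ioo ρk ρmax ∧ hugoniot Γ h ρk pk p ρ = 0 :=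
  hugoniot_unique_root_general Γ h Γinf ρk pk ρmax hΓd hhd hC1b hΓinf hC2a hC3a hρk hpk hhk hρmax
    hmax
end

section
/- Let A_1, A_2, ω, R_1, R_2, ρ_0 > 0 with R_1 > R_2, set α = (A_2R_2²/(A_1R_1(R_1 − R_2)))·exp(((2 + ω)(R_1 − R_2) − R_2)/R_2), and define h(ρ) = A_1(1 − ωρ/(R_1ρ_0))·exp(−R_1ρ_0/ρ) + A_2(1 − ωρ/(R_2ρ_0))·exp(−R_2ρ_0/ρ) for ρ > 0. Then h'(ρ) → 0 as ρ → 0⁺, and h'(ρ) ≥ 0 for every ρ with 0 < ρ ≤ R_1ρ_0/(2 + ω + α). -/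
open Set Filter

/-- The reference function of the JWL equation of state, written in
Mie-Grüneisen form `p = ωρe + h(ρ)`. -/
noncomputable def jwlH (A1 A2 ω R1 R2 ρ0 : ℝ) : ℝ → ℝ :=
  fun ρ =>
    A1 * (1 - ω * ρ / (R1 * ρ0)) * Real.exp (-(R1 * ρ0 / ρ))
      + A2 * (1 - ω * ρ / (R2 * ρ0)) * Real.exp (-(R2 * ρ0 / ρ))

/-!
Each summand of `h` has the form `A (1 - ωρ/c) e^{-c/ρ}` with `c = Rρ₀`. Its derivative
`A e^{-c/ρ} (c/ρ² - ω/ρ - ω/c)` tends to `0` as `ρ → 0⁺`, since `e^{-c/ρ}` beats every power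
of `1/ρ`, and its second derivative is `A c e^{-c/ρ} (c - (2 + ω)ρ) / ρ⁴`. In `h''` the
`c₁`-term dominates the possibly negative `c₂`-term: writing `e^{-c₂/ρ} = e^{-c₁/ρ} e^{(c₁-c₂)/ρ}`
and using `t e^{-t} ≤ e^{-1}` bounds the negative part by `A₁ c₁ α ρ e^{-c₁/ρ}`, which is absorbed
as long as `(2 + ω + α) ρ ≤ c₁`. Hence `h'` is nondecreasing on `(0, c₁/(2 + ω + α)]` and tends
to `0` at `0⁺`, so it is nonnegative there.
-/

open Real Topology

noncomputable def jwlTerm (A ω c ρ : ℝ) : ℝ :=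
  A * (1 - ω * ρ / c) * exp (-(c / ρ))

noncomputable def jwlTermDeriv (A ω c ρ : ℝ) : ℝ :=
  A * exp (-(c / ρ)) * (c / ρ ^ 2 - ω / ρ - ω / c)

/-- The constant `α` of the statement, written through `cᵢ = Rᵢρ₀` and `s = 2 + ω`. -/
noncomputable def jwlAlpha (A1 A2 s c1 c2 : ℝ) : ℝ :=
  A2 * c2 ^ 2 / (A1 * c1 * (c1 - c2)) * exp (s * (c1 - c2) / c2 - 1)

lemma jwlAlpha_mul_right (A1 A2 s R1 R2 ρ0 : ℝ) (hR2 : R2 ≠ 0) (hρ0 : ρ0 ≠ 0) :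
    jwlAlpha A1 A2 s (R1 * ρ0) (R2 * ρ0) =
      A2 * R2 ^ 2 / (A1 * R1 * (R1 - R2)) * exp ((s * (R1 - R2) - R2) / R2) := by
  have hexponent : s * (R1 * ρ0 - R2 * ρ0) / (R2 * ρ0) - 1 = (s * (R1 - R2) - R2) / R2 := by
    field_simp
  rw [jwlAlpha, hexponent, show A2 * (R2 * ρ0) ^ 2 = A2 * R2 ^ 2 * ρ0 ^ 2 by ring,
    show A1 * (R1 * ρ0) * (R1 * ρ0 - R2 * ρ0) = A1 * R1 * (R1 - R2) * ρ0 ^ 2 by ring,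
    mul_div_mul_right _ _ (pow_ne_zero 2 hρ0)]

lemma hasDerivAt_exp_neg_div (c : ℝ) {ρ : ℝ} (hρ : ρ ≠ 0) :
    HasDerivAt (fun x => exp (-(c / x))) (exp (-(c / ρ)) * (c / ρ ^ 2)) ρ :=
  ((hasDerivAt_const ρ c).fun_div (hasDerivAt_id' ρ) hρ).fun_neg.exp.congr_deriv (by ring)

lemma hasDerivAt_jwlTerm (A ω : ℝ) {c ρ : ℝ} (hc : c ≠ 0) (hρ : ρ ≠ 0) :
    HasDerivAt (jwlTerm A ω c) (jwlTermDeriv A ω c ρ) ρ := by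
  have hlin : HasDerivAt (fun x => A * (1 - ω * x / c)) (A * -(ω / c)) ρ := by
    simpa using ((((hasDerivAt_id ρ).const_mul ω).div_const c).const_sub 1).const_mul A
  refine (hlin.mul (hasDerivAt_exp_neg_div c hρ)).congr_deriv ?_
  unfold jwlTermDeriv
  field_simp
  ring

lemma hasDerivAt_jwlTermDeriv (A ω : ℝ) {c ρ : ℝ} (hc : c ≠ 0) (hρ : ρ ≠ 0) :
    HasDerivAt (jwlTermDeriv A ω c)
      (A * c * exp (-(c / ρ)) * (c - (2 + ω) * ρ) / ρ ^ 4) ρ := by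
  have hpoly := (((hasDerivAt_const ρ c).fun_div (hasDerivAt_pow 2 ρ) (pow_ne_zero 2 hρ)).fun_sub
    ((hasDerivAt_const ρ ω).fun_div (hasDerivAt_id' ρ) hρ)).fun_sub (hasDerivAt_const ρ (ω / c))
  refine (((hasDerivAt_exp_neg_div c hρ).const_mul A).mul hpoly).congr_deriv ?_
  field_simp
  ring

lemma tendsto_jwlTermDeriv_nhdsGT_zero (A ω : ℝ) {c : ℝ} (hc : 0 < c) :
    Tendsto (jwlTermDeriv A ω c) (𝓝[>] 0) (𝓝 0) := by
  have hdecay (s : ℝ) := tendsto_rpow_mul_exp_neg_mul_atTop_nhds_zero s c hc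
  have hpoly : Tendsto (fun u : ℝ => A * c * (u ^ (2 : ℝ) * exp (-c * u))
      - A * ω * (u ^ (1 : ℝ) * exp (-c * u)) - A * ω / c * (u ^ (0 : ℝ) * exp (-c * u)))
      atTop (𝓝 0) := by
    simpa using (((hdecay 2).const_mul (A * c)).sub ((hdecay 1).const_mul (A * ω))).sub
      ((hdecay 0).const_mul (A * ω / c))
  refine (hpoly.comp tendsto_inv_nhdsGT_zero).congr' ?_
  filter_upwards [self_mem_nhdsWithin] with ρ (hρ : 0 < ρ)
  simp only [Function.comp, jwlTermDeriv, rpow_two, rpow_one, rpow_zero]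
  field_simp

lemma mul_exp_neg_mul_div_le {k x : ℝ} (hk : 0 < k) (hx : 0 < x) (y : ℝ) :
    y * exp (-(k * y / x)) ≤ x / k * exp (-1) := by
  have h := mul_exp_neg_le_exp_neg_one (k * y / x)
  calc y * exp (-(k * y / x)) = x / k * (k * y / x * exp (-(k * y / x))) := by
        field_simp
    _ ≤ x / k * exp (-1) := by gcongr

lemma mul_exp_neg_div_mul_sub_le {c1 c2 x : ℝ} (hc2 : 0 < c2) (hc : c2 < c1) (hx : 0 < x)
    (s : ℝ) :
    c2 * exp (-(c2 / x)) * (s * x - c2) ≤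
      c2 ^ 2 / (c1 - c2) * exp (s * (c1 - c2) / c2 - 1) * x * exp (-(c1 / x)) := by
  set k := (c1 - c2) / c2 with hk_def
  have hk : 0 < k := div_pos (sub_pos.mpr hc) hc2
  have hsplit : exp (-(c2 / x)) =
      exp (s * (c1 - c2) / c2) * exp (-(c1 / x)) * exp (-(k * (s * x - c2) / x)) := by
    rw [← exp_add, ← exp_add, hk_def]
    congr 1
    field_simp
    ring
  calc c2 * exp (-(c2 / x)) * (s * x - c2)
      = c2 * exp (s * (c1 - c2) / c2) * exp (-(c1 / x)) *
          ((s * x - c2) * exp (-(k * (s * x - c2) / x))) := by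
        rw [hsplit]
        ring
    _ ≤ c2 * exp (s * (c1 - c2) / c2) * exp (-(c1 / x)) * (x / k * exp (-1)) :=
        mul_le_mul_of_nonneg_left (mul_exp_neg_mul_div_le hk hx _) (by positivity)
    _ = c2 ^ 2 / (c1 - c2) * exp (s * (c1 - c2) / c2 - 1) * x * exp (-(c1 / x)) := by
        rw [exp_sub, exp_neg 1, hk_def]
        field_simp

lemma jwl_second_deriv_numerator_nonneg {A1 A2 c1 c2 s x : ℝ} (hA1 : 0 < A1) (hA2 : 0 ≤ A2)
    (hc2 : 0 < c2) (hc : c2 < c1) (hx : 0 < x)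
    (hxc1 : x * (s + jwlAlpha A1 A2 s c1 c2) ≤ c1) :
    0 ≤ A1 * c1 * exp (-(c1 / x)) * (c1 - s * x) + A2 * c2 * exp (-(c2 / x)) * (c2 - s * x) := by
  have hc1 : 0 < c1 := hc2.trans hc
  have hα : A1 * c1 * jwlAlpha A1 A2 s c1 c2 =
      A2 * (c2 ^ 2 / (c1 - c2) * exp (s * (c1 - c2) / c2 - 1)) := by
    unfold jwlAlpha
    field_simp
  have hdominated : A2 * c2 * exp (-(c2 / x)) * (s * x - c2) ≤
      A1 * c1 * exp (-(c1 / x)) * (c1 - s * x) :=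
    calc A2 * c2 * exp (-(c2 / x)) * (s * x - c2)
        = A2 * (c2 * exp (-(c2 / x)) * (s * x - c2)) := by ring
      _ ≤ A2 * (c2 ^ 2 / (c1 - c2) * exp (s * (c1 - c2) / c2 - 1) * x * exp (-(c1 / x))) :=
          mul_le_mul_of_nonneg_left (mul_exp_neg_div_mul_sub_le hc2 hc hx s) hA2
      _ = A1 * c1 * exp (-(c1 / x)) * (jwlAlpha A1 A2 s c1 c2 * x) := by
          linear_combination -(x * exp (-(c1 / x))) * hα
      _ ≤ A1 * c1 * exp (-(c1 / x)) * (c1 - s * x) := by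
          gcongr
          linarith
  linarith

lemma monotoneOn_jwlTermDeriv_add {A1 A2 c1 c2 : ℝ} (ω : ℝ) (hA1 : 0 < A1) (hA2 : 0 ≤ A2)
    (hc2 : 0 < c2) (hc : c2 < c1) :
    MonotoneOn (fun ρ => jwlTermDeriv A1 ω c1 ρ + jwlTermDeriv A2 ω c2 ρ)
      (Ioc 0 (c1 / (2 + ω + jwlAlpha A1 A2 (2 + ω) c1 c2))) := by
  have hc1 : 0 < c1 := hc2.trans hc
  have hderiv (x : ℝ) (hx : x ≠ 0) :=
    (hasDerivAt_jwlTermDeriv A1 ω hc1.ne' hx).add (hasDerivAt_jwlTermDeriv A2 ω hc2.ne' hx)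
  refine monotoneOn_of_hasDerivWithinAt_nonneg (convex_Ioc _ _)
    (fun x hx => (hderiv x hx.1.ne').continuousAt.continuousWithinAt)
    (fun x hx => (hderiv x (interior_subset hx).1.ne').hasDerivWithinAt) ?_
  rw [interior_Ioc]
  rintro x ⟨hx, hxM⟩
  have hD : 0 < 2 + ω + jwlAlpha A1 A2 (2 + ω) c1 c2 :=
    (div_pos_iff_of_pos_left hc1).mp (hx.trans hxM)
  rw [← add_div]
  refine div_nonneg ?_ (by positivity)
  simpa only [mul_comm x] using
    jwl_second_deriv_numerator_nonneg hA1 hA2 hc2 hc hx ((le_div_iff₀ hD).mp hxM.le)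

lemma MonotoneOn.le_of_tendsto_nhdsGT {β : Type*} [Preorder β] [TopologicalSpace β]
    [ClosedIicTopology β] {f : ℝ → β} {a b x : ℝ} {L : β} (hf : MonotoneOn f (Ioc a b))
    (hL : Tendsto f (𝓝[>] a) (𝓝 L)) (hx : x ∈ Ioc a b) : L ≤ f x :=
  le_of_tendsto hL <| by
    filter_upwards [Ioo_mem_nhdsGT hx.1] with y hy using
      hf ⟨hy.1, hy.2.le.trans hx.2⟩ hx hy.2.le

theorem jwl_h_first_deriv_nonneg_general
    (A1 A2 ω R1 R2 ρ0 : ℝ)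
    (hA1 : 0 < A1) (hA2 : 0 < A2)
    (hR1 : 0 < R1) (hR2 : 0 < R2) (hρ0 : 0 < ρ0) (hR : R2 < R1) :
    Tendsto (deriv (jwlH A1 A2 ω R1 R2 ρ0)) (nhdsWithin 0 (Ioi 0))
        (nhds 0) ∧
      ∀ ρ : ℝ, 0 < ρ →
        ρ ≤ R1 * ρ0 / (2 + ω +
          A2 * R2 ^ 2 / (A1 * R1 * (R1 - R2)) *
            Real.exp (((2 + ω) * (R1 - R2) - R2) / R2)) →
        0 ≤ deriv (jwlH A1 A2 ω R1 R2 ρ0) ρ := by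
  have hc1 : 0 < R1 * ρ0 := mul_pos hR1 hρ0
  have hc2 : 0 < R2 * ρ0 := mul_pos hR2 hρ0
  set F := fun ρ => jwlTermDeriv A1 ω (R1 * ρ0) ρ + jwlTermDeriv A2 ω (R2 * ρ0) ρ
  have hderiv (ρ : ℝ) (hρ : ρ ≠ 0) : deriv (jwlH A1 A2 ω R1 R2 ρ0) ρ = F ρ :=
    ((hasDerivAt_jwlTerm A1 ω hc1.ne' hρ).add (hasDerivAt_jwlTerm A2 ω hc2.ne' hρ)).deriv
  have hlim : Tendsto F (𝓝[>] 0) (𝓝 0) := by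
    simpa using (tendsto_jwlTermDeriv_nhdsGT_zero A1 ω hc1).add
      (tendsto_jwlTermDeriv_nhdsGT_zero A2 ω hc2)
  refine ⟨hlim.congr' ?_, fun ρ hρ hρM => ?_⟩
  · filter_upwards [self_mem_nhdsWithin] with ρ (hρ : 0 < ρ) using (hderiv ρ hρ.ne').symm
  rw [← jwlAlpha_mul_right A1 A2 (2 + ω) R1 R2 ρ0 hR2.ne' hρ0.ne'] at hρM
  rw [hderiv ρ hρ.ne']
  exact (monotoneOn_jwlTermDeriv_add ω hA1 hA2.le hc2 (by gcongr)).le_of_tendsto_nhdsGT hlim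
    ⟨hρ, hρM⟩

/-- For the JWL reference function `h`, the derivative `h'` vanishes as
`ρ → 0⁺`, and `h'(ρ) ≥ 0` for every density
`0 < ρ ≤ R_1ρ_0/(2 + ω + α)`. -/
theorem jwl_h_first_deriv_nonneg
    (A1 A2 ω R1 R2 ρ0 : ℝ)
    (hA1 : 0 < A1) (hA2 : 0 < A2) (hω : 0 < ω)
    (hR1 : 0 < R1) (hR2 : 0 < R2) (hρ0 : 0 < ρ0) (hR : R2 < R1) :
    Tendsto (deriv (jwlH A1 A2 ω R1 R2 ρ0)) (nhdsWithin 0 (Ioi 0))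
        (nhds 0) ∧
      ∀ ρ : ℝ, 0 < ρ →
        ρ ≤ R1 * ρ0 / (2 + ω +
          A2 * R2 ^ 2 / (A1 * R1 * (R1 - R2)) *
            Real.exp (((2 + ω) * (R1 - R2) - R2) / R2)) →
        0 ≤ deriv (jwlH A1 A2 ω R1 R2 ρ0) ρ :=
  jwl_h_first_deriv_nonneg_general A1 A2 ω R1 R2 ρ0 hA1 hA2 hR1 hR2 hρ0 hR
end
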